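/- Let m ≥ 3 and let Γ be the non-commuting graph of the dihedral group D_{2m}, and let v be the number of vertices of Γ (so v = 2m − 1 if m is odd and v = 2m − 2 if m is even). Then v < E(Γ) < 2v − 2; that is, Γ is neither hypoenergetic nor hyperenergetic. -/

import Mathlib

open Matrix Polynomial

noncomputable section

/-- The non-commuting graph of a group `G`: vertices are the non-central elements,
and two vertices are adjacent iff they do not commute. -/
def ncGraph (G : Type*) [Group G] : SimpleGraph {g : G // g ∉ Subgroup.center G} where
  Adj x y := (x : G) * (y : G) ≠ (y : G) * (x : G)
  symm := ⟨fun _ _ h h' => h h'.symm⟩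
  loopless := ⟨fun _ h => h rfl⟩

instance ncGraph.fintypeVerts (G : Type*) [Group G] [Finite G] :
    Fintype {g : G // g ∉ Subgroup.center G} :=
  Fintype.ofFinite _

instance ncGraph.decidableAdj (G : Type*) [Group G] [DecidableEq G] :
    DecidableRel (ncGraph G).Adj :=
  fun x y => inferInstanceAs (Decidable ((x : G) * (y : G) ≠ (y : G) * (x : G)))

/-- The signless Laplacian matrix `D + A` of a graph, over `ℝ`. -/
def signlessLap {V : Type*} [Fintype V] [DecidableEq V] (Γ : SimpleGraph V)
    [DecidableRel Γ.Adj] : Matrix V V ℝ :=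
  Matrix.diagonal (fun v => (Γ.degree v : ℝ)) + Γ.adjMatrix ℝ

/-- Sum of `|γ - c|` over the eigenvalues `γ` (with multiplicity) of a real symmetric
matrix (junk value `0` if the matrix is not symmetric). -/
def eigAbsSum {V : Type*} [Fintype V] [DecidableEq V] (M : Matrix V V ℝ) (c : ℝ) : ℝ :=
  letI := Classical.dec M.IsHermitian
  if h : M.IsHermitian then ∑ i, |h.eigenvalues i - c| else 0

/-- The energy of a graph: the sum of the absolute values of the adjacency eigenvalues. -/
def graphEnergy {V : Type*} [Fintype V] [DecidableEq V] (Γ : SimpleGraph V)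
    [DecidableRel Γ.Adj] : ℝ :=
  eigAbsSum (Γ.adjMatrix ℝ) 0

/-- The average degree `2·(#edges)/(#vertices)` of a graph. -/
def avgDeg {V : Type*} [Fintype V] [DecidableEq V] (Γ : SimpleGraph V)
    [DecidableRel Γ.Adj] : ℝ :=
  2 * Γ.edgeFinset.card / Fintype.card V

/-- The Laplacian energy of a graph. -/
def lapEnergy {V : Type*} [Fintype V] [DecidableEq V] (Γ : SimpleGraph V)
    [DecidableRel Γ.Adj] : ℝ :=
  eigAbsSum (Γ.lapMatrix ℝ) (avgDeg Γ)

/-- The signless Laplacian energy of a graph. -/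
def slapEnergy {V : Type*} [Fintype V] [DecidableEq V] (Γ : SimpleGraph V)
    [DecidableRel Γ.Adj] : ℝ :=
  eigAbsSum (signlessLap Γ) (avgDeg Γ)


namespace NCDG

open DihedralGroup

variable {m : ℕ}

/-- half point -/
def hp (m : ℕ) : ZMod m := ((m / 2 : ℕ) : ZMod m)

lemma hp_add_self (he : Even m) [NeZero m] : hp m + hp m = 0 := by
  unfold hp
  rw [← Nat.cast_add]
  have : m / 2 + m / 2 = m := by
    obtain ⟨k, hk⟩ := he; omega
  rw [this, ZMod.natCast_self]

lemma hp_ne_zero (hm : 3 ≤ m) (he : Even m) [NeZero m] : hp m ≠ 0 := by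
  unfold hp
  intro h
  rw [ZMod.natCast_eq_zero_iff] at h
  have h2 : m / 2 < m := by omega
  have h1 : 0 < m / 2 := by omega
  exact absurd (Nat.le_of_dvd h1 h) (by omega)

lemma two_torsion [NeZero m] (d : ZMod m) (hd : d + d = 0) :
    d = 0 ∨ (Even m ∧ d = hp m) := by
  have hv : ((d.val + d.val : ℕ) : ZMod m) = 0 := by
    push_cast [ZMod.natCast_zmod_val]; exact hd
  rw [ZMod.natCast_eq_zero_iff] at hv
  have hlt : d.val < m := ZMod.val_lt d
  have hm0 : 0 < m := Nat.pos_of_ne_zero (NeZero.ne m)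
  rcases hv with ⟨k, hk⟩
  have hk01 : k = 0 ∨ k = 1 := by
    by_contra hc
    push_neg at hc
    have h2 : 2 ≤ k := by omega
    have := Nat.mul_le_mul_left m h2
    omega
  rcases hk01 with rfl | rfl
  · left
    have : d.val = 0 := by omega
    rwa [ZMod.val_eq_zero] at this
  · right
    constructor
    · exact ⟨d.val, by omega⟩
    · have : d.val = m / 2 := by omega
      rw [← ZMod.natCast_zmod_val d, this]; rfl

lemma two_torsion_iff [NeZero m] (d : ZMod m) :
    d + d = 0 ↔ (d = 0 ∨ (Even m ∧ d = hp m)) := by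
  constructor
  · exact two_torsion d
  · rintro (rfl | ⟨he, rfl⟩)
    · simp
    · exact hp_add_self he

lemma r_mem_center_iff [NeZero m] (i : ZMod m) :
    r i ∈ Subgroup.center (DihedralGroup m) ↔ i + i = 0 := by
  rw [Subgroup.mem_center_iff]
  constructor
  · intro h
    have := h (sr 0)
    simp only [sr_mul_r, r_mul_sr, zero_add, zero_sub] at this
    have h2 : (i : ZMod m) = -i := by
      injection this
    linear_combination h2
  · intro h g
    have hi : -i = i := by linear_combination -h
    cases g with
    | r j => simp [add_comm]
    | sr j => simp [sub_eq_add_neg, hi]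

lemma sr_not_mem_center (hm : 3 ≤ m) [NeZero m] (i : ZMod m) :
    sr i ∉ Subgroup.center (DihedralGroup m) := by
  rw [Subgroup.mem_center_iff]
  intro h
  have := h (r 1)
  simp only [r_mul_sr, sr_mul_r] at this
  have h2 : i - 1 = i + 1 := by injection this
  have h3 : ((2:ℕ) : ZMod m) = 0 := by push_cast; linear_combination -h2
  rw [ZMod.natCast_eq_zero_iff] at h3
  have := Nat.le_of_dvd (by norm_num) h3
  omega


section Count

variable (m : ℕ) [NeZero m]

local notation "G" => DihedralGroup m
local notation "Z" => Subgroup.center (DihedralGroup m)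
local notation "V" => {g : DihedralGroup m // g ∉ Subgroup.center (DihedralGroup m)}

def sumEquiv : ZMod m ⊕ ZMod m ≃ DihedralGroup m where
  toFun s := match s with | .inl j => r j | .inr j => sr j
  invFun g := match g with | r j => .inl j | sr j => .inr j
  left_inv := by rintro (x | x) <;> rfl
  right_inv := by rintro (x | x) <;> rfl

lemma sum_dihedral (f : DihedralGroup m → ℝ) :
    ∑ g : G, f g = (∑ i : ZMod m, f (r i)) + ∑ i : ZMod m, f (sr i) := by
  rw [← Equiv.sum_comp (sumEquiv m) f, Fintype.sum_sum_type]
  rfl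

lemma sum_vertex (f : DihedralGroup m → ℝ) :
    ∑ x : V, f x.1 = ∑ g : G, if g ∉ Z then f g else 0 := by
  classical
  rw [← Finset.sum_filter]
  exact (Finset.sum_subtype _ (by simp) f).symm

def Tset : Finset (ZMod m) := Finset.univ.filter (fun i => i + i = 0)

lemma Tset_odd (ho : Odd m) : Tset m = {0} := by
  ext i
  simp only [Tset, Finset.mem_filter, Finset.mem_univ, true_and, Finset.mem_singleton]
  rw [two_torsion_iff]
  simp [Nat.not_even_iff_odd.mpr ho]

lemma Tset_even (hm : 3 ≤ m) (he : Even m) : Tset m = {0, hp m} := by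
  ext i
  simp only [Tset, Finset.mem_filter, Finset.mem_univ, true_and, Finset.mem_insert,
    Finset.mem_singleton]
  rw [two_torsion_iff]
  simp [he]

lemma Tcard_odd (ho : Odd m) : (Tset m).card = 1 := by rw [Tset_odd m ho]; rfl

lemma Tcard_even (hm : 3 ≤ m) (he : Even m) : (Tset m).card = 2 := by
  rw [Tset_even m hm he, Finset.card_insert_of_notMem (by simp [Ne.symm (hp_ne_zero hm he)]),
    Finset.card_singleton]

def ug : DihedralGroup m → ℝ := fun g => match g with | r _ => 1 | sr _ => 0
def wg : DihedralGroup m → ℝ := fun g => match g with | r _ => 0 | sr _ => 1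

def uf : V → ℝ := fun x => ug m x.1
def wf : V → ℝ := fun x => wg m x.1

lemma sum_wf (hm : 3 ≤ m) : ∑ x : V, wf m x = m := by
  classical
  show ∑ x : V, wg m x.1 = (m : ℝ)
  rw [sum_vertex, sum_dihedral]
  have h1 : ∀ i : ZMod m, (if r i ∉ Z then wg m (r i) else 0) = 0 := by
    intro i; simp [wg]
  have h2 : ∀ i : ZMod m, (if sr i ∉ Z then wg m (sr i) else 0) = 1 := by
    intro i; simp [wg, sr_not_mem_center hm i]
  simp only [h1, h2, Finset.sum_const, Finset.sum_const_zero, zero_add]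
  simp [ZMod.card]

lemma sum_uf (hm : 3 ≤ m) : ∑ x : V, uf m x = (m : ℝ) - (Tset m).card := by
  classical
  show ∑ x : V, ug m x.1 = (m : ℝ) - (Tset m).card
  rw [sum_vertex, sum_dihedral]
  have h2 : ∀ i : ZMod m, (if sr i ∉ Z then ug m (sr i) else 0) = 0 := by
    intro i; simp [ug]
  have h1 : ∀ i : ZMod m, (if r i ∉ Z then ug m (r i) else 0) = if i + i = 0 then 0 else 1 := by
    intro i
    by_cases h : i + i = 0 <;> simp [ug, h, r_mem_center_iff]
  simp only [h1, h2, Finset.sum_const_zero, add_zero]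
  classical
  have hsw : ∀ i : ZMod m, (if i + i = 0 then (0:ℝ) else 1) = if ¬(i + i = 0) then 1 else 0 :=
    fun i => by by_cases h : i + i = 0 <;> simp [h]
  simp only [hsw, Finset.sum_boole]
  have hTle : (Tset m).card ≤ m := by
    calc (Tset m).card ≤ (Finset.univ : Finset (ZMod m)).card := Finset.card_filter_le _ _
    _ = m := by simp [ZMod.card]
  have hn : (Finset.univ.filter (fun i : ZMod m => ¬(i + i = 0))).card
      = m - (Tset m).card := by
    have h := Finset.card_filter_add_card_filter_not
      (s := (Finset.univ : Finset (ZMod m))) (fun i : ZMod m => i + i = 0)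
    have hz : (Finset.univ : Finset (ZMod m)).card = m := by simp [ZMod.card]
    have hT : (Tset m) = Finset.univ.filter (fun i : ZMod m => i + i = 0) := rfl
    rw [hT]
    omega
  rw [show (Finset.filter (fun i : ZMod m => ¬i + i = 0) Finset.univ) =
    (Finset.univ.filter (fun i : ZMod m => ¬(i + i = 0))) from rfl, hn]
  push_cast [Nat.cast_sub hTle]
  ring

lemma r_injective : Function.Injective (r : ZMod m → DihedralGroup m) := by
  intro a b h; injection h

lemma cardV (hm : 3 ≤ m) : Fintype.card V = 2 * m - (Tset m).card := by
  classical
  rw [Fintype.card_of_subtype (Finset.univ.filter (fun g : G => g ∉ Z)) (by simp)]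
  have key : (Finset.univ.filter (fun g : G => g ∈ Z)) = (Tset m).image r := by
    ext g
    simp only [Finset.mem_filter, Finset.mem_univ, true_and, Finset.mem_image, Tset]
    cases g with
    | r i =>
      rw [r_mem_center_iff]
      constructor
      · intro h; exact ⟨i, by simpa using h, rfl⟩
      · rintro ⟨a, ha, hr⟩
        have : a = i := by injection hr
        subst this; simpa using ha
    | sr i =>
      constructor
      · intro h; exact absurd h (sr_not_mem_center hm i)
      · rintro ⟨a, _, hr⟩; exact absurd hr (by simp)
  have hsplit := Finset.card_filter_add_card_filter_not
    (s := (Finset.univ : Finset G)) (fun g : G => g ∈ Z)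
  have hcG : (Finset.univ : Finset G).card = 2 * m := by
    simpa [Finset.card_univ] using DihedralGroup.card (n := m)
  have hcz : (Finset.univ.filter (fun g : G => g ∈ Z)).card = (Tset m).card := by
    rw [key, Finset.card_image_of_injective _ (r_injective m)]
  have hTle : (Tset m).card ≤ 2 * m := by
    calc (Tset m).card ≤ (Finset.univ : Finset (ZMod m)).card := Finset.card_filter_le _ _
    _ = m := by simp [ZMod.card]
    _ ≤ 2 * m := by omega
  have hfe : (Finset.filter (fun g : G => g ∉ Z) Finset.univ)
      = (Finset.filter (fun g : G => ¬ (g ∈ Z)) Finset.univ) := rfl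
  omega


end Count

section MatrixHelpers
variable {ι : Type*} [Fintype ι] [DecidableEq ι]

lemma vmv_mul_vmv (a b c d : ι → ℝ) :
    vecMulVec a b * vecMulVec c d = (b ⬝ᵥ c) • vecMulVec a d := by
  ext x y
  simp only [Matrix.mul_apply, vecMulVec_apply, Matrix.smul_apply, dotProduct, smul_eq_mul,
    Finset.sum_mul]
  exact Finset.sum_congr rfl fun k _ => by ring

lemma vmv_mul_diag (a b c : ι → ℝ) :
    vecMulVec a b * diagonal c = vecMulVec a (fun j => b j * c j) := by
  ext x y
  rw [Matrix.mul_diagonal]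
  simp [vecMulVec_apply, mul_assoc]

lemma diag_mul_vmv (c a b : ι → ℝ) :
    diagonal c * vecMulVec a b = vecMulVec (fun i => c i * a i) b := by
  ext x y
  rw [Matrix.diagonal_mul]
  simp [vecMulVec_apply, mul_assoc]

lemma vmv_zero_right (a : ι → ℝ) : vecMulVec a (fun (_ : ι) => (0:ℝ)) = 0 := by
  ext x y; simp [vecMulVec_apply]

lemma vmv_zero_left (b : ι → ℝ) : vecMulVec (fun (_ : ι) => (0:ℝ)) b = 0 := by
  ext x y; simp [vecMulVec_apply]

lemma trace_vmv (a b : ι → ℝ) : (vecMulVec a b).trace = a ⬝ᵥ b := by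
  simp [Matrix.trace, vecMulVec_apply, Matrix.diag, dotProduct]

lemma trace_eq_sum_eigs (A : Matrix ι ι ℝ) (hA : A.IsHermitian) :
    ∑ i, hA.eigenvalues i = A.trace := by
  have h := hA.spectral_theorem
  set U : Matrix ι ι ℝ := (hA.eigenvectorUnitary : Matrix ι ι ℝ) with hU
  have hsu : star U * U = 1 := Unitary.coe_star_mul_self hA.eigenvectorUnitary
  have e1 : A.trace = (star U * (U * diagonal (RCLike.ofReal ∘ hA.eigenvalues))).trace := by
    conv_lhs => rw [h, Unitary.conjStarAlgAut_apply]
    rw [Matrix.trace_mul_comm]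
  rw [e1, ← Matrix.mul_assoc, hsu, Matrix.one_mul, Matrix.trace_diagonal]
  simp [RCLike.ofReal_real_eq_id]

lemma trace_sq_eq_sum_eigs_sq (A : Matrix ι ι ℝ) (hA : A.IsHermitian) :
    ∑ i, (hA.eigenvalues i)^2 = (A * A).trace := by
  have h := hA.spectral_theorem
  set U : Matrix ι ι ℝ := (hA.eigenvectorUnitary : Matrix ι ι ℝ) with hU
  set D : Matrix ι ι ℝ := diagonal (RCLike.ofReal ∘ hA.eigenvalues) with hD
  have hsu : star U * U = 1 := Unitary.coe_star_mul_self hA.eigenvectorUnitary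
  have e1 : A * A = U * (D * ((star U * U) * (D * star U))) := by
    conv_lhs => rw [h, Unitary.conjStarAlgAut_apply]
    simp only [Matrix.mul_assoc]
    rfl
  rw [hsu, Matrix.one_mul] at e1
  have e2 : (A * A).trace = (D * D).trace := by
    rw [e1, Matrix.trace_mul_comm]
    simp only [Matrix.mul_assoc]
    rw [hsu]
    simp [Matrix.mul_one]
  rw [e2, hD, Matrix.diagonal_mul_diagonal, Matrix.trace_diagonal]
  simp [RCLike.ofReal_real_eq_id, pow_two]

lemma eig_roots {A : Matrix ι ι ℝ} (hA : A.IsHermitian) (c ρ s : ℝ)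
    (hann : (A * A + c • A) * (A * A - ρ • A - s • (1 : Matrix ι ι ℝ)) = 0) (i : ι) :
    ((hA.eigenvalues i)^2 + c * hA.eigenvalues i) *
      ((hA.eigenvalues i)^2 - ρ * hA.eigenvalues i - s) = 0 := by
  set lam := hA.eigenvalues i with hlam
  set v : ι → ℝ := ⇑(hA.eigenvectorBasis i) with hv
  have hAv : A *ᵥ v = lam • v := hA.mulVec_eigenvectorBasis i
  have hvne : v ≠ 0 := by
    intro hc
    apply hA.eigenvectorBasis.orthonormal.ne_zero i
    ext x
    exact congrFun hc x
  have hA2v : (A * A) *ᵥ v = (lam ^ 2) • v := by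
    rw [← Matrix.mulVec_mulVec, hAv, Matrix.mulVec_smul, hAv, smul_smul, pow_two]
  have hNv : (A * A - ρ • A - s • (1 : Matrix ι ι ℝ)) *ᵥ v = (lam^2 - ρ*lam - s) • v := by
    rw [Matrix.sub_mulVec, Matrix.sub_mulVec, hA2v, Matrix.smul_mulVec, hAv,
      Matrix.smul_mulVec, Matrix.one_mulVec, smul_smul]
    ext x
    simp [sub_smul, smul_smul]
    ring
  have hMv : (A * A + c • A) *ᵥ v = (lam^2 + c*lam) • v := by
    rw [Matrix.add_mulVec, hA2v, Matrix.smul_mulVec, hAv, smul_smul]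
    ext x
    simp [add_smul]
    ring
  have h0 : ((A * A + c • A) * (A * A - ρ • A - s • (1 : Matrix ι ι ℝ))) *ᵥ v = 0 := by
    rw [hann, Matrix.zero_mulVec]
  rw [← Matrix.mulVec_mulVec, hNv, Matrix.mulVec_smul, hMv, smul_smul] at h0
  rcases smul_eq_zero.mp h0 with h | h
  · linarith [h, mul_comm (lam^2 - ρ*lam - s) (lam^2 + c*lam)]
  · exact absurd h hvne

end MatrixHelpers

/-- The key real-analysis lemma. -/
lemma energyBounds {ι : Type*} [Fintype ι] (lam : ι → ℝ) (ρ σ : ℝ)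
    (hρ : 1 ≤ ρ) (hσ : ρ < σ) (hσ3ρ : σ < 3*ρ) (hKM : (ρ+σ)*(σ-ρ) < 4*(σ*ρ))
    (hUP : σ*ρ < (ρ+σ-1)*(σ-1))
    (hroot : ∀ i, lam i ≤ 0 ∨ (lam i)^2 = ρ*(lam i) + σ*ρ)
    (h1 : ∑ i, lam i = 0) (h2 : ∑ i, (lam i)^2 = 3*(σ*ρ)) :
    ρ + σ < ∑ i, |lam i| ∧ ∑ i, |lam i| < 2*(ρ+σ) - 2 := by
  classical
  have hρ0 : 0 < ρ := by linarith
  have hσ0 : 0 < σ := by linarith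
  have hσρ : 0 < σ * ρ := by positivity
  -- every positive eigenvalue satisfies the quadratic, is > ρ and ≥ 3ρ/2
  have hbig : ∀ i, 0 < lam i → (lam i)^2 = ρ*(lam i) + σ*ρ ∧ ρ < lam i ∧ 3*ρ/2 ≤ lam i := by
    intro i hi
    rcases hroot i with h | h
    · linarith
    refine ⟨h, ?_, ?_⟩
    · nlinarith
    · by_contra hc
      push_neg at hc
      nlinarith
  -- existence of a positive eigenvalue
  have hex : ∃ i, 0 < lam i := by
    by_contra hc
    push_neg at hc
    have hall : ∀ i ∈ Finset.univ, lam i = 0 :=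
      (Finset.sum_eq_zero_iff_of_nonpos (fun i _ => hc i)).mp h1
    have hz : ∑ i, (lam i)^2 = 0 :=
      Finset.sum_eq_zero (fun i hi => by rw [hall i hi]; ring)
    rw [h2] at hz
    nlinarith
  obtain ⟨i₀, hi₀⟩ := hex
  -- uniqueness
  have huniq : ∀ j, j ≠ i₀ → lam j ≤ 0 := by
    intro j hj
    by_contra hc
    push_neg at hc
    obtain ⟨hq1, hgt1, hge1⟩ := hbig i₀ hi₀
    obtain ⟨hq2, hgt2, hge2⟩ := hbig j hc
    have hsub : ({j, i₀} : Finset ι) ⊆ Finset.univ := Finset.subset_univ _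
    have hpair : ∑ k ∈ ({j, i₀} : Finset ι), (lam k)^2 = (lam j)^2 + (lam i₀)^2 :=
      Finset.sum_pair hj
    have hle : ∑ k ∈ ({j, i₀} : Finset ι), (lam k)^2 ≤ ∑ k, (lam k)^2 :=
      Finset.sum_le_sum_of_subset_of_nonneg hsub (fun k _ _ => sq_nonneg _)
    rw [hpair, h2] at hle
    nlinarith
  -- energy equals 2 * lam i₀
  have hE : ∑ i, |lam i| = 2 * lam i₀ := by
    have key : ∀ k, |lam k| + lam k = if k = i₀ then 2 * lam i₀ else 0 := by
      intro k
      by_cases hk : k = i₀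
      · subst hk; rw [abs_of_pos hi₀]; simp [two_mul]
      · have := huniq k hk
        rw [abs_of_nonpos this]; simp [hk]
    have : ∑ k, (|lam k| + lam k) = 2 * lam i₀ := by
      simp only [key, Finset.sum_ite_eq' Finset.univ i₀, Finset.mem_univ, if_true]
    rw [Finset.sum_add_distrib, h1, add_zero] at this
    exact this
  obtain ⟨hq, hgt, _⟩ := hbig i₀ hi₀
  rw [hE]
  constructor
  · -- lower bound: 2 lam > ρ + σ
    by_contra hc
    push_neg at hc
    nlinarith
  · -- upper bound: 2 lam < 2(ρ+σ) - 2
    by_contra hc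
    push_neg at hc
    nlinarith


-- Odd-case matrix layer
section Dihedral2
open DihedralGroup
variable (m : ℕ) [NeZero m]

local notation "G" => DihedralGroup m
local notation "Z" => Subgroup.center (DihedralGroup m)
local notation "V" => {g : DihedralGroup m // g ∉ Subgroup.center (DihedralGroup m)}

lemma ncAdj {H : Type*} [Group H] (x y : {g : H // g ∉ Subgroup.center H}) :
    (ncGraph H).Adj x y ↔ (x : H) * (y : H) ≠ (y : H) * (x : H) := Iff.rfl

lemma uf_r (i : ZMod m) (h : r i ∉ Z) : uf m ⟨r i, h⟩ = 1 := rfl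
lemma uf_sr (i : ZMod m) (h : sr i ∉ Z) : uf m ⟨sr i, h⟩ = 0 := rfl
lemma wf_r (i : ZMod m) (h : r i ∉ Z) : wf m ⟨r i, h⟩ = 0 := rfl
lemma wf_sr (i : ZMod m) (h : sr i ∉ Z) : wf m ⟨sr i, h⟩ = 1 := rfl

lemma uf_mul_wf (x : V) : uf m x * wf m x = 0 := by
  obtain ⟨g, hg⟩ := x; cases g <;> simp [uf, wf, ug, wg]

lemma wf_mul_uf (x : V) : wf m x * uf m x = 0 := by
  obtain ⟨g, hg⟩ := x; cases g <;> simp [uf, wf, ug, wg]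

lemma uf_mul_uf (x : V) : uf m x * uf m x = uf m x := by
  obtain ⟨g, hg⟩ := x; cases g <;> simp [uf, ug]

lemma wf_mul_wf (x : V) : wf m x * wf m x = wf m x := by
  obtain ⟨g, hg⟩ := x; cases g <;> simp [wf, wg]

lemma wf_dot_wf (hm : 3 ≤ m) : wf m ⬝ᵥ wf m = (m : ℝ) := by
  unfold dotProduct
  simp only [wf_mul_wf]
  exact sum_wf m hm

lemma uf_dot_wf : uf m ⬝ᵥ wf m = 0 := by
  unfold dotProduct; simp only [uf_mul_wf]; simp

lemma wf_dot_uf : wf m ⬝ᵥ uf m = 0 := by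
  unfold dotProduct; simp only [wf_mul_uf]; simp

lemma uf_dot_uf (hm : 3 ≤ m) : uf m ⬝ᵥ uf m = (m : ℝ) - (Tset m).card := by
  unfold dotProduct
  simp only [uf_mul_uf]
  exact sum_uf m hm

lemma adj_herm : ((ncGraph (DihedralGroup m)).adjMatrix ℝ).IsHermitian := by
  have h := SimpleGraph.isSymm_adjMatrix (α := ℝ) (ncGraph (DihedralGroup m))
  unfold Matrix.IsHermitian
  ext x y
  rw [Matrix.conjTranspose_apply]
  rw [show ((ncGraph (DihedralGroup m)).adjMatrix ℝ) y x
    = ((ncGraph (DihedralGroup m)).adjMatrix ℝ)ᵀ x y from rfl, h]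
  simp [star]

lemma adj_eq_odd (hm : 3 ≤ m) (ho : Odd m) :
    (ncGraph (DihedralGroup m)).adjMatrix ℝ =
      vecMulVec (uf m) (wf m) + vecMulVec (wf m) (uf m) + vecMulVec (wf m) (wf m)
        - Matrix.diagonal (wf m) := by
  have hodd : ¬ Even m := Nat.not_even_iff_odd.mpr ho
  ext x y
  obtain ⟨gx, hgx⟩ := x
  obtain ⟨gy, hgy⟩ := y
  simp only [Matrix.sub_apply, Matrix.add_apply, vecMulVec_apply, SimpleGraph.adjMatrix_apply,
    Matrix.diagonal_apply]
  cases gx with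
  | r i =>
    have hne : ¬ (i + i = 0) := fun h => hgx ((r_mem_center_iff i).mpr h)
    cases gy with
    | r j =>
      have hcomm : ¬ (ncGraph (DihedralGroup m)).Adj ⟨r i, hgx⟩ ⟨r j, hgy⟩ := by
        rw [ncAdj]
        push_neg
        show r i * r j = r j * r i
        simp [add_comm]
      rw [if_neg hcomm]
      by_cases hxy : (⟨r i, hgx⟩ : V) = ⟨r j, hgy⟩
      · rw [if_pos hxy]; simp [uf_r, wf_r]
      · rw [if_neg hxy]; simp [uf_r, wf_r]
    | sr j =>
      have hadj : (ncGraph (DihedralGroup m)).Adj ⟨r i, hgx⟩ ⟨sr j, hgy⟩ := by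
        rw [ncAdj]
        show r i * sr j ≠ sr j * r i
        simp only [r_mul_sr, sr_mul_r, ne_eq]
        intro h
        have h2 : j - i = j + i := by injection h
        exact hne (by linear_combination -h2)
      rw [if_pos hadj, if_neg (by simp : ¬(⟨r i, hgx⟩ : V) = ⟨sr j, hgy⟩)]
      simp [uf_r, wf_r, uf_sr, wf_sr]
  | sr i =>
    cases gy with
    | r j =>
      have hnej : ¬ (j + j = 0) := fun h => hgy ((r_mem_center_iff j).mpr h)
      have hadj : (ncGraph (DihedralGroup m)).Adj ⟨sr i, hgx⟩ ⟨r j, hgy⟩ := by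
        rw [ncAdj]
        show sr i * r j ≠ r j * sr i
        simp only [r_mul_sr, sr_mul_r, ne_eq]
        intro h
        have h2 : i + j = i - j := by injection h
        exact hnej (by linear_combination h2)
      rw [if_pos hadj, if_neg (by simp : ¬(⟨sr i, hgx⟩ : V) = ⟨r j, hgy⟩)]
      simp [uf_r, wf_r, uf_sr, wf_sr]
    | sr j =>
      by_cases hij : i = j
      · subst hij
        have hcomm : ¬ (ncGraph (DihedralGroup m)).Adj ⟨sr i, hgx⟩ ⟨sr i, hgy⟩ := by
          rw [ncAdj]; push_neg; rfl
        rw [if_neg hcomm, if_pos (by simp : (⟨sr i, hgx⟩ : V) = ⟨sr i, hgy⟩)]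
        simp [uf_sr, wf_sr]
      · have hadj : (ncGraph (DihedralGroup m)).Adj ⟨sr i, hgx⟩ ⟨sr j, hgy⟩ := by
          rw [ncAdj]
          show sr i * sr j ≠ sr j * sr i
          simp only [sr_mul_sr, ne_eq]
          intro h
          have h2 : j - i = i - j := by injection h
          have h3 : (j - i) + (j - i) = 0 := by linear_combination h2
          rcases two_torsion _ h3 with h4 | ⟨he, _⟩
          · exact hij (by linear_combination -h4)
          · exact hodd he
        rw [if_pos hadj, if_neg (by simp [hij] : ¬(⟨sr i, hgx⟩ : V) = ⟨sr j, hgy⟩)]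
        simp [uf_sr, wf_sr]

lemma sq_eq_odd (hm : 3 ≤ m) (ho : Odd m) :
    (ncGraph (DihedralGroup m)).adjMatrix ℝ * (ncGraph (DihedralGroup m)).adjMatrix ℝ =
      (m : ℝ) • vecMulVec (uf m) (uf m)
      + ((m : ℝ) - 1) • vecMulVec (uf m) (wf m)
      + ((m : ℝ) - 1) • vecMulVec (wf m) (uf m)
      + (2*(m : ℝ) - 3) • vecMulVec (wf m) (wf m)
      + Matrix.diagonal (wf m) := by
  have hT : ((Tset m).card : ℝ) = 1 := by rw [Tcard_odd m ho]; norm_num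
  rw [adj_eq_odd m hm ho]
  simp only [Matrix.sub_mul, Matrix.mul_sub, Matrix.add_mul, Matrix.mul_add,
    vmv_mul_vmv, vmv_mul_diag, diag_mul_vmv, Matrix.diagonal_mul_diagonal,
    uf_dot_wf, wf_dot_uf, wf_dot_wf m hm, uf_dot_uf m hm, hT,
    uf_mul_wf, wf_mul_uf, uf_mul_uf, wf_mul_wf]
  simp only [vmv_zero_right, vmv_zero_left, smul_zero, zero_smul, add_zero, zero_add]
  module

end Dihedral2
section OddMain
open DihedralGroup
variable (m : ℕ) [NeZero m]

local notation "V" => {g : DihedralGroup m // g ∉ Subgroup.center (DihedralGroup m)}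

lemma ann_odd (hm : 3 ≤ m) (ho : Odd m) :
    ((ncGraph (DihedralGroup m)).adjMatrix ℝ * (ncGraph (DihedralGroup m)).adjMatrix ℝ
      + (1:ℝ) • (ncGraph (DihedralGroup m)).adjMatrix ℝ) *
    ((ncGraph (DihedralGroup m)).adjMatrix ℝ * (ncGraph (DihedralGroup m)).adjMatrix ℝ
      - ((m:ℝ) - 1) • (ncGraph (DihedralGroup m)).adjMatrix ℝ
      - ((m:ℝ) * ((m:ℝ) - 1)) • (1 : Matrix V V ℝ)) = 0 := by
  rw [sq_eq_odd m hm ho, adj_eq_odd m hm ho]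
  have hT : ((Tset m).card : ℝ) = 1 := by rw [Tcard_odd m ho]; norm_num
  simp only [Matrix.sub_mul, Matrix.mul_sub, Matrix.add_mul, Matrix.mul_add,
    Matrix.smul_mul, Matrix.mul_smul, Matrix.mul_one, Matrix.one_mul,
    vmv_mul_vmv, vmv_mul_diag, diag_mul_vmv, Matrix.diagonal_mul_diagonal,
    uf_dot_wf, wf_dot_uf, wf_dot_wf m hm, uf_dot_uf m hm, hT,
    uf_mul_wf, wf_mul_uf, uf_mul_uf, wf_mul_wf,
    vmv_zero_right, vmv_zero_left, smul_zero, zero_smul, add_zero, zero_add]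
  module

theorem odd_main (hm : 3 ≤ m) (ho : Odd m) :
    Fintype.card V = 2 * m - 1 ∧
    ((Fintype.card V : ℝ) < graphEnergy (ncGraph (DihedralGroup m)) ∧
      graphEnergy (ncGraph (DihedralGroup m)) < 2 * (Fintype.card V : ℝ) - 2) := by
  have hcard : Fintype.card V = 2 * m - 1 := by rw [cardV m hm, Tcard_odd m ho]
  have hH : ((ncGraph (DihedralGroup m)).adjMatrix ℝ).IsHermitian := adj_herm m
  set lam := hH.eigenvalues with hlam
  have hm3 : (3:ℝ) ≤ (m:ℝ) := by exact_mod_cast hm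
  have hT : ((Tset m).card : ℝ) = 1 := by rw [Tcard_odd m ho]; norm_num
  have hsum : ∑ i, lam i = 0 := by
    rw [hlam, trace_eq_sum_eigs _ hH]
    exact SimpleGraph.trace_adjMatrix (α := ℝ) _
  have hsq : ∑ i, (lam i)^2 = 3 * ((m:ℝ) * ((m:ℝ) - 1)) := by
    rw [hlam, trace_sq_eq_sum_eigs_sq _ hH, sq_eq_odd m hm ho]
    simp only [Matrix.trace_add, Matrix.trace_smul, trace_vmv, Matrix.trace_diagonal,
      uf_dot_wf, wf_dot_uf, wf_dot_wf m hm, uf_dot_uf m hm, hT, smul_eq_mul]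
    rw [show ∑ i : V, wf m i = (m:ℝ) from sum_wf m hm]
    ring
  have hroot : ∀ i, lam i ≤ 0 ∨ (lam i)^2 = ((m:ℝ)-1) * lam i + (m:ℝ) * ((m:ℝ)-1) := by
    intro i
    have h := eig_roots hH 1 ((m:ℝ)-1) ((m:ℝ) * ((m:ℝ)-1)) (ann_odd m hm ho) i
    rcases mul_eq_zero.mp h with h1 | h1
    · left; nlinarith [sq_nonneg (lam i)]
    · right; linarith [h1]
  obtain ⟨hlow, hup⟩ := energyBounds lam ((m:ℝ)-1) (m:ℝ)
    (by linarith) (by linarith) (by linarith) (by nlinarith) (by nlinarith)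
    hroot hsum hsq
  have hE : graphEnergy (ncGraph (DihedralGroup m)) = ∑ i, |lam i| := by
    rw [graphEnergy, eigAbsSum, dif_pos hH]
    simp only [sub_zero]
    rfl
  have hcast : ((Fintype.card V : ℕ) : ℝ) = ((m:ℝ) - 1) + (m:ℝ) := by
    rw [hcard]
    have : (2 * m - 1 : ℕ) = m + (m - 1) := by omega
    rw [this]
    push_cast [Nat.cast_sub (by omega : 1 ≤ m)]
    ring
  refine ⟨hcard, ?_, ?_⟩
  · rw [hE, hcast]; linarith
  · rw [hE, hcast]; linarith

end OddMain
section EvenCase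
open DihedralGroup
variable (m : ℕ) [NeZero m]

local notation "Z" => Subgroup.center (DihedralGroup m)
local notation "V" => {g : DihedralGroup m // g ∉ Subgroup.center (DihedralGroup m)}

def tau : V → V := fun x =>
  if h : (x.1 * r (hp m)) ∉ Subgroup.center (DihedralGroup m) then ⟨x.1 * r (hp m), h⟩ else x

lemma r_hp_center (he : Even m) : r (hp m) ∈ Z := (r_mem_center_iff _).mpr (hp_add_self he)

lemma tau_val (he : Even m) (x : V) : (tau m x).1 = x.1 * r (hp m) := by
  have hz := r_hp_center m he
  have hnc : x.1 * r (hp m) ∉ Z := by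
    intro hmem
    apply x.2
    have h2 := mul_mem hmem (inv_mem hz)
    simpa [mul_assoc] using h2
  rw [tau, dif_pos hnc]

lemma tau_tau (he : Even m) (x : V) : tau m (tau m x) = x := by
  apply Subtype.ext
  rw [tau_val m he, tau_val m he, mul_assoc, r_mul_r, hp_add_self he, ← one_def, mul_one]

lemma tau_ne (hm : 3 ≤ m) (he : Even m) (x : V) : tau m x ≠ x := by
  intro h
  have h1 : x.1 * r (hp m) = x.1 := by rw [← tau_val m he, h]
  have h2 : r (hp m) = (1 : DihedralGroup m) := by
    have := mul_left_cancel (a := x.1) (b := r (hp m)) (c := 1) (by rw [mul_one]; exact h1)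
    exact this
  rw [one_def] at h2
  exact hp_ne_zero hm he (by injection h2)

lemma uf_tau (he : Even m) (x : V) : uf m (tau m x) = uf m x := by
  show ug m (tau m x).1 = ug m x.1
  rw [tau_val m he]
  obtain ⟨g, hg⟩ := x
  cases g <;> simp [ug]

lemma wf_tau (he : Even m) (x : V) : wf m (tau m x) = wf m x := by
  show wg m (tau m x).1 = wg m x.1
  rw [tau_val m he]
  obtain ⟨g, hg⟩ := x
  cases g <;> simp [wg]

def Qm : Matrix V V ℝ := Matrix.of fun x y => if tau m x = y then 1 else 0

def Pm : Matrix V V ℝ := Matrix.of fun x y => wf m x * (if tau m x = y then 1 else 0)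

lemma Pm_eq : Pm m = Matrix.diagonal (wf m) * Qm m := by
  ext x y
  rw [Matrix.diagonal_mul]
  rfl

lemma Q_mul_vmv (a b : V → ℝ) :
    Qm m * vecMulVec a b = vecMulVec (fun x => a (tau m x)) b := by
  ext x y
  rw [Matrix.mul_apply]
  simp only [Qm, Matrix.of_apply, vecMulVec_apply, ite_mul, one_mul, zero_mul]
  rw [Finset.sum_ite_eq]
  simp

lemma vmv_mul_Q (he : Even m) (a b : V → ℝ) :
    vecMulVec a b * Qm m = vecMulVec a (fun y => b (tau m y)) := by
  ext x y
  rw [Matrix.mul_apply]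
  simp only [Qm, Matrix.of_apply, vecMulVec_apply, mul_ite, mul_one, mul_zero]
  have hcond : ∀ k : V, (tau m k = y) = (k = tau m y) :=
    fun k => propext ⟨fun h => by rw [← h, tau_tau m he], fun h => by rw [h, tau_tau m he]⟩
  simp only [hcond]
  rw [Finset.sum_ite_eq']
  simp

lemma Q_mul_Q (he : Even m) : Qm m * Qm m = 1 := by
  ext x y
  rw [Matrix.mul_apply]
  simp only [Qm, Matrix.of_apply, ite_mul, one_mul, zero_mul]
  rw [Finset.sum_ite_eq]
  simp [tau_tau m he, Matrix.one_apply]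

lemma Q_diag_comm (he : Even m) :
    Qm m * Matrix.diagonal (wf m) = Matrix.diagonal (wf m) * Qm m := by
  ext x y
  rw [Matrix.mul_diagonal, Matrix.diagonal_mul]
  by_cases h : tau m x = y
  · simp only [Qm, Matrix.of_apply, if_pos h]
    rw [← h, wf_tau m he]
    ring
  · simp [Qm, h]

lemma P_mul_E0 (he : Even m) :
    Pm m * vecMulVec (uf m) (uf m) = 0 := by
  rw [Pm_eq, Matrix.mul_assoc, Q_mul_vmv,
    show (fun x => uf m (tau m x)) = uf m from funext (uf_tau m he), diag_mul_vmv,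
    show (fun x => wf m x * uf m x) = (fun (_ : V) => (0:ℝ)) from funext (wf_mul_uf m),
    vmv_zero_left]

lemma P_mul_E1 (he : Even m) :
    Pm m * vecMulVec (uf m) (wf m) = 0 := by
  rw [Pm_eq, Matrix.mul_assoc, Q_mul_vmv,
    show (fun x => uf m (tau m x)) = uf m from funext (uf_tau m he), diag_mul_vmv,
    show (fun x => wf m x * uf m x) = (fun (_ : V) => (0:ℝ)) from funext (wf_mul_uf m),
    vmv_zero_left]

lemma P_mul_E2 (he : Even m) :
    Pm m * vecMulVec (wf m) (uf m) = vecMulVec (wf m) (uf m) := by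
  rw [Pm_eq, Matrix.mul_assoc, Q_mul_vmv,
    show (fun x => wf m (tau m x)) = wf m from funext (wf_tau m he), diag_mul_vmv,
    show (fun x => wf m x * wf m x) = wf m from funext (wf_mul_wf m)]

lemma P_mul_E3 (he : Even m) :
    Pm m * vecMulVec (wf m) (wf m) = vecMulVec (wf m) (wf m) := by
  rw [Pm_eq, Matrix.mul_assoc, Q_mul_vmv,
    show (fun x => wf m (tau m x)) = wf m from funext (wf_tau m he), diag_mul_vmv,
    show (fun x => wf m x * wf m x) = wf m from funext (wf_mul_wf m)]

lemma E0_mul_P (he : Even m) :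
    vecMulVec (uf m) (uf m) * Pm m = 0 := by
  rw [Pm_eq, ← Matrix.mul_assoc, vmv_mul_diag,
    show (fun x => uf m x * wf m x) = (fun (_ : V) => (0:ℝ)) from funext (uf_mul_wf m),
    vmv_zero_right, Matrix.zero_mul]

lemma E1_mul_P (he : Even m) :
    vecMulVec (uf m) (wf m) * Pm m = vecMulVec (uf m) (wf m) := by
  rw [Pm_eq, ← Matrix.mul_assoc, vmv_mul_diag,
    show (fun x => wf m x * wf m x) = wf m from funext (wf_mul_wf m), vmv_mul_Q m he,
    show (fun y => wf m (tau m y)) = wf m from funext (wf_tau m he)]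

lemma E2_mul_P (he : Even m) :
    vecMulVec (wf m) (uf m) * Pm m = 0 := by
  rw [Pm_eq, ← Matrix.mul_assoc, vmv_mul_diag,
    show (fun x => uf m x * wf m x) = (fun (_ : V) => (0:ℝ)) from funext (uf_mul_wf m),
    vmv_zero_right, Matrix.zero_mul]

lemma E3_mul_P (he : Even m) :
    vecMulVec (wf m) (wf m) * Pm m = vecMulVec (wf m) (wf m) := by
  rw [Pm_eq, ← Matrix.mul_assoc, vmv_mul_diag,
    show (fun x => wf m x * wf m x) = wf m from funext (wf_mul_wf m), vmv_mul_Q m he,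
    show (fun y => wf m (tau m y)) = wf m from funext (wf_tau m he)]

lemma P_mul_diag (he : Even m) :
    Pm m * Matrix.diagonal (wf m) = Pm m := by
  rw [Pm_eq, Matrix.mul_assoc, Q_diag_comm m he, ← Matrix.mul_assoc,
    Matrix.diagonal_mul_diagonal,
    show (fun x => wf m x * wf m x) = wf m from funext (wf_mul_wf m)]

lemma diag_mul_P (he : Even m) :
    Matrix.diagonal (wf m) * Pm m = Pm m := by
  rw [Pm_eq, ← Matrix.mul_assoc, Matrix.diagonal_mul_diagonal,
    show (fun x => wf m x * wf m x) = wf m from funext (wf_mul_wf m)]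

lemma P_mul_P (he : Even m) :
    Pm m * Pm m = Matrix.diagonal (wf m) := by
  rw [Pm_eq, Matrix.mul_assoc, ← Matrix.mul_assoc (Qm m), Q_diag_comm m he,
    Matrix.mul_assoc, Q_mul_Q m he, Matrix.mul_one, Matrix.diagonal_mul_diagonal,
    show (fun x => wf m x * wf m x) = wf m from funext (wf_mul_wf m)]

lemma trace_P (hm : 3 ≤ m) (he : Even m) : (Pm m).trace = 0 := by
  rw [Matrix.trace]
  apply Finset.sum_eq_zero
  intro x _
  simp only [Matrix.diag_apply, Pm, Matrix.of_apply, if_neg (tau_ne m hm he x), mul_zero]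

end EvenCase
section EvenMain
open DihedralGroup
variable (m : ℕ) [NeZero m]

local notation "Z" => Subgroup.center (DihedralGroup m)
local notation "V" => {g : DihedralGroup m // g ∉ Subgroup.center (DihedralGroup m)}

lemma tau_eq_iff (he : Even m) (x y : V) :
    (tau m x = y) ↔ x.1 * r (hp m) = y.1 := by
  rw [Subtype.ext_iff, tau_val m he]

lemma adj_eq_even (hm : 3 ≤ m) (he : Even m) :
    (ncGraph (DihedralGroup m)).adjMatrix ℝ =
      vecMulVec (uf m) (wf m) + vecMulVec (wf m) (uf m) + vecMulVec (wf m) (wf m)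
        - Matrix.diagonal (wf m) - Pm m := by
  have hc0 : hp m ≠ 0 := hp_ne_zero hm he
  ext x y
  obtain ⟨gx, hgx⟩ := x
  obtain ⟨gy, hgy⟩ := y
  simp only [Matrix.sub_apply, Matrix.add_apply, vecMulVec_apply, SimpleGraph.adjMatrix_apply,
    Matrix.diagonal_apply, Pm, Matrix.of_apply]
  cases gx with
  | r i =>
    have hne : ¬ (i + i = 0) := fun h => hgx ((r_mem_center_iff i).mpr h)
    cases gy with
    | r j =>
      have hcomm : ¬ (ncGraph (DihedralGroup m)).Adj ⟨r i, hgx⟩ ⟨r j, hgy⟩ := by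
        rw [ncAdj]
        push_neg
        show r i * r j = r j * r i
        simp [add_comm]
      rw [if_neg hcomm]
      by_cases hxy : (⟨r i, hgx⟩ : V) = ⟨r j, hgy⟩
      · rw [if_pos hxy]; simp [uf_r, wf_r]
      · rw [if_neg hxy]; simp [uf_r, wf_r]
    | sr j =>
      have hadj : (ncGraph (DihedralGroup m)).Adj ⟨r i, hgx⟩ ⟨sr j, hgy⟩ := by
        rw [ncAdj]
        show r i * sr j ≠ sr j * r i
        simp only [r_mul_sr, sr_mul_r, ne_eq]
        intro h
        have h2 : j - i = j + i := by injection h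
        exact hne (by linear_combination -h2)
      rw [if_pos hadj, if_neg (by simp : ¬(⟨r i, hgx⟩ : V) = ⟨sr j, hgy⟩)]
      simp [uf_r, wf_r, uf_sr, wf_sr]
  | sr i =>
    cases gy with
    | r j =>
      have hnej : ¬ (j + j = 0) := fun h => hgy ((r_mem_center_iff j).mpr h)
      have hadj : (ncGraph (DihedralGroup m)).Adj ⟨sr i, hgx⟩ ⟨r j, hgy⟩ := by
        rw [ncAdj]
        show sr i * r j ≠ r j * sr i
        simp only [r_mul_sr, sr_mul_r, ne_eq]
        intro h
        have h2 : i + j = i - j := by injection h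
        exact hnej (by linear_combination h2)
      have hP : ¬ (tau m ⟨sr i, hgx⟩ = ⟨r j, hgy⟩) := by
        rw [tau_eq_iff m he]
        simp
      rw [if_pos hadj, if_neg (by simp : ¬(⟨sr i, hgx⟩ : V) = ⟨r j, hgy⟩), if_neg hP]
      simp [uf_r, wf_r, uf_sr, wf_sr]
    | sr j =>
      have hPiff : (tau m ⟨sr i, hgx⟩ = ⟨sr j, hgy⟩) ↔ j = i + hp m := by
        rw [tau_eq_iff m he]
        show sr i * r (hp m) = sr j ↔ j = i + hp m
        rw [sr_mul_r]
        constructor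
        · intro h; have := (sr.injEq _ _).mp h; exact this.symm
        · intro h; rw [h]
      by_cases hij : i = j
      · subst hij
        have hcomm : ¬ (ncGraph (DihedralGroup m)).Adj ⟨sr i, hgx⟩ ⟨sr i, hgy⟩ := by
          rw [ncAdj]; push_neg; rfl
        have hP : ¬ (tau m ⟨sr i, hgx⟩ = ⟨sr i, hgy⟩) := by
          rw [hPiff]
          intro h
          exact hc0 (by linear_combination -h)
        rw [if_neg hcomm, if_pos (by simp : (⟨sr i, hgx⟩ : V) = ⟨sr i, hgy⟩), if_neg hP]
        simp [uf_sr, wf_sr]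
      · have hxy : ¬ (⟨sr i, hgx⟩ : V) = ⟨sr j, hgy⟩ := by simp [hij]
        by_cases hjc : j = i + hp m
        · -- commuting pair of reflections
          have hcomm : ¬ (ncGraph (DihedralGroup m)).Adj ⟨sr i, hgx⟩ ⟨sr j, hgy⟩ := by
            rw [ncAdj]
            push_neg
            show sr i * sr j = sr j * sr i
            simp only [sr_mul_sr]
            congr 1
            have h2 : hp m + hp m = 0 := hp_add_self he
            rw [hjc]
            linear_combination h2
          have hP : tau m ⟨sr i, hgx⟩ = ⟨sr j, hgy⟩ := hPiff.mpr hjc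
          rw [if_neg hcomm, if_neg hxy, if_pos hP]
          simp [uf_sr, wf_sr]
        · have hadj : (ncGraph (DihedralGroup m)).Adj ⟨sr i, hgx⟩ ⟨sr j, hgy⟩ := by
            rw [ncAdj]
            show sr i * sr j ≠ sr j * sr i
            simp only [sr_mul_sr, ne_eq]
            intro h
            have h2 : j - i = i - j := by injection h
            have h3 : (j - i) + (j - i) = 0 := by linear_combination h2
            rcases two_torsion _ h3 with h4 | ⟨_, h5⟩
            · exact hij (by linear_combination -h4)
            · exact hjc (by linear_combination h5)
          have hP : ¬ (tau m ⟨sr i, hgx⟩ = ⟨sr j, hgy⟩) := fun h => hjc (hPiff.mp h)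
          rw [if_pos hadj, if_neg hxy, if_neg hP]
          simp [uf_sr, wf_sr]

lemma sq_eq_even (hm : 3 ≤ m) (he : Even m) :
    (ncGraph (DihedralGroup m)).adjMatrix ℝ * (ncGraph (DihedralGroup m)).adjMatrix ℝ =
      (m : ℝ) • vecMulVec (uf m) (uf m)
      + ((m : ℝ) - 2) • vecMulVec (uf m) (wf m)
      + ((m : ℝ) - 2) • vecMulVec (wf m) (uf m)
      + (2*(m : ℝ) - 6) • vecMulVec (wf m) (wf m)
      + (2:ℝ) • Matrix.diagonal (wf m) + (2:ℝ) • Pm m := by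
  have hT : ((Tset m).card : ℝ) = 2 := by rw [Tcard_even m hm he]; norm_num
  rw [adj_eq_even m hm he]
  simp only [Matrix.sub_mul, Matrix.mul_sub, Matrix.add_mul, Matrix.mul_add,
    vmv_mul_vmv, vmv_mul_diag, diag_mul_vmv, Matrix.diagonal_mul_diagonal,
    P_mul_E0 m he, P_mul_E1 m he, P_mul_E2 m he, P_mul_E3 m he,
    E0_mul_P m he, E1_mul_P m he, E2_mul_P m he, E3_mul_P m he,
    P_mul_diag m he, diag_mul_P m he, P_mul_P m he,
    uf_dot_wf, wf_dot_uf, wf_dot_wf m hm, uf_dot_uf m hm, hT,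
    uf_mul_wf, wf_mul_uf, uf_mul_uf, wf_mul_wf,
    vmv_zero_right, vmv_zero_left, smul_zero, zero_smul, add_zero, zero_add]
  module

lemma ann_even (hm : 3 ≤ m) (he : Even m) :
    ((ncGraph (DihedralGroup m)).adjMatrix ℝ * (ncGraph (DihedralGroup m)).adjMatrix ℝ
      + (2:ℝ) • (ncGraph (DihedralGroup m)).adjMatrix ℝ) *
    ((ncGraph (DihedralGroup m)).adjMatrix ℝ * (ncGraph (DihedralGroup m)).adjMatrix ℝ
      - ((m:ℝ) - 2) • (ncGraph (DihedralGroup m)).adjMatrix ℝ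
      - ((m:ℝ) * ((m:ℝ) - 2)) • (1 : Matrix V V ℝ)) = 0 := by
  rw [sq_eq_even m hm he, adj_eq_even m hm he]
  have hT : ((Tset m).card : ℝ) = 2 := by rw [Tcard_even m hm he]; norm_num
  simp only [Matrix.sub_mul, Matrix.mul_sub, Matrix.add_mul, Matrix.mul_add,
    Matrix.smul_mul, Matrix.mul_smul, Matrix.mul_one, Matrix.one_mul,
    vmv_mul_vmv, vmv_mul_diag, diag_mul_vmv, Matrix.diagonal_mul_diagonal,
    P_mul_E0 m he, P_mul_E1 m he, P_mul_E2 m he, P_mul_E3 m he,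
    E0_mul_P m he, E1_mul_P m he, E2_mul_P m he, E3_mul_P m he,
    P_mul_diag m he, diag_mul_P m he, P_mul_P m he,
    uf_dot_wf, wf_dot_uf, wf_dot_wf m hm, uf_dot_uf m hm, hT,
    uf_mul_wf, wf_mul_uf, uf_mul_uf, wf_mul_wf,
    vmv_zero_right, vmv_zero_left, smul_zero, zero_smul, add_zero, zero_add]
  module

theorem even_main (hm : 3 ≤ m) (he : Even m) :
    Fintype.card V = 2 * m - 2 ∧
    ((Fintype.card V : ℝ) < graphEnergy (ncGraph (DihedralGroup m)) ∧
      graphEnergy (ncGraph (DihedralGroup m)) < 2 * (Fintype.card V : ℝ) - 2) := by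
  have hm4 : 4 ≤ m := by
    rcases he with ⟨k, hk⟩; omega
  have hcard : Fintype.card V = 2 * m - 2 := by rw [cardV m hm, Tcard_even m hm he]
  have hH : ((ncGraph (DihedralGroup m)).adjMatrix ℝ).IsHermitian := adj_herm m
  set lam := hH.eigenvalues with hlam
  have hm4' : (4:ℝ) ≤ (m:ℝ) := by exact_mod_cast hm4
  have hT : ((Tset m).card : ℝ) = 2 := by rw [Tcard_even m hm he]; norm_num
  have hsum : ∑ i, lam i = 0 := by
    rw [hlam, trace_eq_sum_eigs _ hH]
    exact SimpleGraph.trace_adjMatrix (α := ℝ) _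
  have hsq : ∑ i, (lam i)^2 = 3 * ((m:ℝ) * ((m:ℝ) - 2)) := by
    rw [hlam, trace_sq_eq_sum_eigs_sq _ hH, sq_eq_even m hm he]
    simp only [Matrix.trace_add, Matrix.trace_smul, trace_vmv, Matrix.trace_diagonal,
      uf_dot_wf, wf_dot_uf, wf_dot_wf m hm, uf_dot_uf m hm, hT, smul_eq_mul,
      trace_P m hm he]
    rw [show ∑ i : V, wf m i = (m:ℝ) from sum_wf m hm]
    ring
  have hroot : ∀ i, lam i ≤ 0 ∨ (lam i)^2 = ((m:ℝ)-2) * lam i + (m:ℝ) * ((m:ℝ)-2) := by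
    intro i
    have h := eig_roots hH 2 ((m:ℝ)-2) ((m:ℝ) * ((m:ℝ)-2)) (ann_even m hm he) i
    rcases mul_eq_zero.mp h with h1 | h1
    · left; nlinarith [sq_nonneg (lam i)]
    · right; linarith [h1]
  obtain ⟨hlow, hup⟩ := energyBounds lam ((m:ℝ)-2) (m:ℝ)
    (by linarith) (by linarith) (by linarith) (by nlinarith) (by nlinarith)
    hroot hsum hsq
  have hE : graphEnergy (ncGraph (DihedralGroup m)) = ∑ i, |lam i| := by
    rw [graphEnergy, eigAbsSum, dif_pos hH]
    simp only [sub_zero]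
    rfl
  have hcast : ((Fintype.card V : ℕ) : ℝ) = ((m:ℝ) - 2) + (m:ℝ) := by
    rw [hcard]
    have h2 : (2 * m - 2 : ℕ) = m + (m - 2) := by omega
    rw [h2]
    push_cast [Nat.cast_sub (by omega : 2 ≤ m)]
    ring
  refine ⟨hcard, ?_, ?_⟩
  · rw [hE, hcast]; linarith
  · rw [hE, hcast]; linarith

end EvenMain
end NCDG

/-- **The non-commuting graph of `D_{2m}` is neither hypoenergetic nor hyperenergetic.**
With `v` the number of vertices (`v = 2m - 1` for `m` odd, `v = 2m - 2` for `m` even),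
`v < E(Γ) < 2v - 2`. -/
theorem stmt_3 (m : ℕ) (hm : 3 ≤ m) :
    haveI : NeZero m := ⟨by omega⟩
    (Odd m →
      Fintype.card {g : DihedralGroup m // g ∉ Subgroup.center (DihedralGroup m)} = 2 * m - 1) ∧
    (Even m →
      Fintype.card {g : DihedralGroup m // g ∉ Subgroup.center (DihedralGroup m)} = 2 * m - 2) ∧
    (Fintype.card {g : DihedralGroup m // g ∉ Subgroup.center (DihedralGroup m)} : ℝ) <
      graphEnergy (ncGraph (DihedralGroup m)) ∧
    graphEnergy (ncGraph (DihedralGroup m)) <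
      2 * (Fintype.card {g : DihedralGroup m // g ∉ Subgroup.center (DihedralGroup m)} : ℝ) - 2 := by
  haveI : NeZero m := ⟨by omega⟩
  rcases Nat.even_or_odd m with he | ho
  · obtain ⟨hcard, hlow, hup⟩ := NCDG.even_main m hm he
    exact ⟨fun ho' => absurd ho' (Nat.not_odd_iff_even.mpr he), fun _ => hcard, hlow, hup⟩
  · obtain ⟨hcard, hlow, hup⟩ := NCDG.odd_main m hm ho
    exact ⟨fun _ => hcard, fun he' => absurd he' (Nat.not_even_iff_odd.mpr ho), hlow, hup⟩
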